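/- Let ρ ∈ (0, 1) and τ > 0. Define φ_ρ(t) = ∫ max(0, ρt + √(1−ρ²)·u) dγ(u) and c(b) = (ρ²·τ/√(1−ρ²)) · exp( −(b²/2)·( ρ²/(1−ρ²) − 1/τ² ) ). Then for every t ∈ ℝ, φ_ρ(t) = ∫_ℝ c(b)·max(0, t−b) dγ_τ(b). Moreover, if (1 + 2τ²)·ρ² > 1, then ∫ c(b)² dγ_τ(b) = ρ⁴·τ² / ( √(1−ρ²) · √((1 + 2τ²)·ρ² − 1) ). -/

import Mathlib

open MeasureTheory ProbabilityTheory Real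
open scoped NNReal ENNReal

/-- The centered Gaussian measure `N(0, σ²)` on `ℝ`. -/
noncomputable def gaussMeasure (σ : ℝ) : Measure ℝ :=
  gaussianReal 0 (Real.toNNReal (σ ^ 2))

/-- The `ρ`-smoothed ReLU `φ_ρ = U_ρ φ`. -/
noncomputable def smoothedRelu (ρ : ℝ) (t : ℝ) : ℝ :=
  ∫ u, max 0 (ρ * t + Real.sqrt (1 - ρ ^ 2) * u) ∂(gaussMeasure 1)

/-- The explicit weight function representing the smoothed ReLU as a Gaussian mixture of
shifted ReLUs. -/
noncomputable def smoothedReluWeight (ρ τ : ℝ) (b : ℝ) : ℝ :=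
  (ρ ^ 2 * τ / Real.sqrt (1 - ρ ^ 2)) *
    Real.exp (-(b ^ 2 / 2) * (ρ ^ 2 / (1 - ρ ^ 2) - 1 / τ ^ 2))

lemma integral_gaussMeasure_eq {σ : ℝ} (hσ : 0 < σ) (g : ℝ → ℝ) :
    ∫ x, g x ∂(gaussMeasure σ) =
      ∫ x, gaussianPDFReal 0 (Real.toNNReal (σ ^ 2)) x * g x := by
  have hv : Real.toNNReal (σ ^ 2) ≠ 0 := by
    simp [Real.toNNReal_eq_zero, not_le, pow_pos hσ, hσ.ne']
  rw [gaussMeasure, gaussianReal_of_var_ne_zero _ hv]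
  have h1 : (gaussianPDF 0 (Real.toNNReal (σ ^ 2)))
      = fun x => ((Real.toNNReal (gaussianPDFReal 0 (Real.toNNReal (σ ^ 2)) x) : ℝ≥0) : ℝ≥0∞) := by
    ext x; rfl
  rw [h1, integral_withDensity_eq_integral_smul
    ((measurable_gaussianPDFReal _ _).real_toNNReal)]
  congr 1; ext x
  rw [NNReal.smul_def, smul_eq_mul, Real.coe_toNNReal _ (gaussianPDFReal_nonneg _ _ _)]

lemma gaussianPDFReal_eval {σ : ℝ} (hσ : 0 < σ) (x : ℝ) :
    gaussianPDFReal 0 (Real.toNNReal (σ ^ 2)) x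
      = (σ * Real.sqrt (2 * π))⁻¹ * Real.exp (-(x ^ 2) / (2 * σ ^ 2)) := by
  rw [gaussianPDFReal]
  have hc : ((Real.toNNReal (σ ^ 2) : ℝ≥0) : ℝ) = σ ^ 2 := Real.coe_toNNReal _ (sq_nonneg σ)
  rw [hc]
  have : Real.sqrt (2 * π * σ ^ 2) = σ * Real.sqrt (2 * π) := by
    rw [mul_comm (2 * π), Real.sqrt_mul (sq_nonneg σ), Real.sqrt_sq hσ.le]
  rw [this, sub_zero]

lemma combine_exp2 (a1 a2 e1 e2 c e : ℝ) (hc : a1 * a2 = c) (he : e1 + e2 = e) :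
    a1 * Real.exp e1 * (a2 * Real.exp e2) = c * Real.exp e := by
  rw [← hc, ← he, Real.exp_add]; ring

lemma combine_exp (a1 a2 e1 e2 c e m : ℝ) (hc : a1 * a2 = c) (he : e1 + e2 = e) :
    a1 * Real.exp e1 * (a2 * Real.exp e2 * m) = c * Real.exp e * m := by
  rw [← hc, ← he, Real.exp_add]; ring

/-- key computation in Proposition G.1: the Gaussian-mixture
representation of the smoothed ReLU and the closed form of its weight norm. -/
theorem smoothedRelu_mixture_representation (ρ τ : ℝ)
    (hρ : ρ ∈ Set.Ioo (0 : ℝ) 1) (hτ : 0 < τ) :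
    (∀ t : ℝ, smoothedRelu ρ t =
      ∫ b, smoothedReluWeight ρ τ b * max 0 (t - b) ∂(gaussMeasure τ)) ∧
    ((1 + 2 * τ ^ 2) * ρ ^ 2 > 1 →
      (∫ b, smoothedReluWeight ρ τ b ^ 2 ∂(gaussMeasure τ)) =
        ρ ^ 4 * τ ^ 2 /
          (Real.sqrt (1 - ρ ^ 2) * Real.sqrt ((1 + 2 * τ ^ 2) * ρ ^ 2 - 1))) := by
  obtain ⟨hρ0, hρ1⟩ := hρ
  have h1ρ : (0:ℝ) < 1 - ρ ^ 2 := by nlinarith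
  have hs_pos : 0 < Real.sqrt (1 - ρ ^ 2) := Real.sqrt_pos.mpr h1ρ
  have hs2 : Real.sqrt (1 - ρ ^ 2) ^ 2 = 1 - ρ ^ 2 := Real.sq_sqrt h1ρ.le
  have h2π : (0:ℝ) < Real.sqrt (2 * π) := Real.sqrt_pos.mpr (by positivity)
  have h2π2 : Real.sqrt (2 * π) ^ 2 = 2 * π := Real.sq_sqrt (by positivity)
  set s := Real.sqrt (1 - ρ ^ 2) with hs
  constructor
  · intro t
    rw [smoothedRelu, integral_gaussMeasure_eq one_pos, integral_gaussMeasure_eq hτ]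
    set a : ℝ := -(s / ρ) with ha
    set g : ℝ → ℝ := fun b =>
      ρ ^ 2 / (s * Real.sqrt (2 * π)) * Real.exp (-(ρ ^ 2 / (2 * (1 - ρ ^ 2))) * b ^ 2)
        * max 0 (t - b) with hg
    have hi : ∀ b, gaussianPDFReal 0 (Real.toNNReal (τ ^ 2)) b
        * (smoothedReluWeight ρ τ b * max 0 (t - b)) = g b := by
      intro b
      rw [gaussianPDFReal_eval hτ, smoothedReluWeight, ← hs]
      simp only [hg]
      have h1 : (τ * Real.sqrt (2 * π))⁻¹ * (ρ ^ 2 * τ / s) = ρ ^ 2 / (s * Real.sqrt (2 * π)) := by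
        field_simp
      have h2 : -b ^ 2 / (2 * τ ^ 2) + -(b ^ 2 / 2) * (ρ ^ 2 / (1 - ρ ^ 2) - 1 / τ ^ 2)
          = -(ρ ^ 2 / (2 * (1 - ρ ^ 2))) * b ^ 2 := by
        field_simp
        ring
      exact combine_exp _ _ _ _ _ _ _ h1 h2
    have hii : ∀ u, gaussianPDFReal 0 (Real.toNNReal ((1:ℝ) ^ 2)) u
        * max 0 (ρ * t + s * u) = (s / ρ) * g (a * u) := by
      intro u
      have hmax : max 0 (t - a * u) = (1 / ρ) * max 0 (ρ * t + s * u) := by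
        rw [mul_max_of_nonneg _ _ (by positivity : (0:ℝ) ≤ 1 / ρ), mul_zero]
        congr 1
        rw [ha]; field_simp; ring
      have hE : -(ρ ^ 2 / (2 * (1 - ρ ^ 2))) * (a * u) ^ 2 = -(u ^ 2) / (2 * (1:ℝ) ^ 2) := by
        rw [ha, ← hs2]; field_simp
      rw [gaussianPDFReal_eval one_pos]
      simp only [hg]
      rw [hmax, hE]
      have hcon : ρ ^ 2 / (s * Real.sqrt (2 * π)) * (s / ρ) * (1 / ρ)
          = ((1:ℝ) * Real.sqrt (2 * π))⁻¹ := by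
        field_simp
      rw [← hcon]; ring
    calc ∫ u, gaussianPDFReal 0 (Real.toNNReal ((1:ℝ) ^ 2)) u * max 0 (ρ * t + s * u)
        = ∫ u, (s / ρ) * g (a * u) := integral_congr_ae (Filter.Eventually.of_forall hii)
      _ = (s / ρ) * ∫ u, g (a * u) := integral_const_mul _ _
      _ = (s / ρ) * (|a⁻¹| • ∫ b, g b) := by rw [MeasureTheory.Measure.integral_comp_mul_left g a]
      _ = ∫ b, g b := by
          rw [smul_eq_mul, ha, abs_inv, abs_neg, abs_of_pos (div_pos hs_pos hρ0)]
          field_simp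
      _ = ∫ b, gaussianPDFReal 0 (Real.toNNReal (τ ^ 2)) b
            * (smoothedReluWeight ρ τ b * max 0 (t - b)) :=
          (integral_congr_ae (Filter.Eventually.of_forall hi)).symm
  · intro hD
    have hDpos : (0:ℝ) < (1 + 2 * τ ^ 2) * ρ ^ 2 - 1 := by linarith
    set D := (1 + 2 * τ ^ 2) * ρ ^ 2 - 1 with hDdef
    have hsD : 0 < Real.sqrt D := Real.sqrt_pos.mpr hDpos
    have hsD2 : Real.sqrt D ^ 2 = D := Real.sq_sqrt hDpos.le
    set A : ℝ := D / (2 * τ ^ 2 * (1 - ρ ^ 2)) with hA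
    set K : ℝ := ρ ^ 4 * τ / ((1 - ρ ^ 2) * Real.sqrt (2 * π)) with hK
    rw [integral_gaussMeasure_eq hτ]
    have hpt : ∀ b, gaussianPDFReal 0 (Real.toNNReal (τ ^ 2)) b * smoothedReluWeight ρ τ b ^ 2
        = K * Real.exp (-A * b ^ 2) := by
      intro b
      rw [gaussianPDFReal_eval hτ, smoothedReluWeight, mul_pow, pow_two (Real.exp _),
        ← Real.exp_add]
      exact combine_exp2 _ _ _ _ _ _
        (by rw [hK, ← hs, ← hs2]; field_simp)
        (by rw [hA, hDdef]; field_simp; ring)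
    rw [integral_congr_ae (Filter.Eventually.of_forall hpt), integral_const_mul,
      integral_gaussian]
    have hπA : π / A = (Real.sqrt (2 * π) * τ * s / Real.sqrt D) ^ 2 := by
      rw [div_pow, mul_pow, mul_pow, h2π2, hs2, hsD2, hA]
      field_simp
    rw [hπA, Real.sqrt_sq (by positivity)]
    rw [hK, ← hs2]
    field_simp
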